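/- Suppose ψ : ℝ^d → ℝ is differentiable and L-smooth with L > 0, and let (v^{s,q}) be the Markov chain coordinate descent iterates generated from an initial point v^{0,0} with step size η ∈ (0, 1/(LSQ)], block sequence k^0,…,k^{S−1}, and Q inner updates per block, with final iterate v^{S,0}. Then ((L+1)/2)·‖v^{S,0} − v^{0,0}‖² ≤ η²·(L+1)·S²·Q²·C₁²·‖∇ψ(v^{0,0})‖² + η²·(L+1)·S·Q·∑_{s=0}^{S−1} ∑_{q=0}^{Q−1} ‖∇_{k^s} ψ(v^{0,0})‖², where C₁ := η·e·L·S·Q. -/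

import Mathlib

/-!
Flatten the block iterates into one sequence `w t = v (t / Q) (t % Q)`, `t ≤ T = S * Q`.
By smoothness every step moves by at most `η (‖∇ψ(w 0)‖ + L ‖w t - w 0‖)`, so the discrete
Grönwall inequality together with `η L T ≤ 1` keeps `‖w t - w 0‖ ≤ η T e ‖∇ψ(w 0)‖`.
Comparing each masked gradient with the one frozen at `w 0` then bounds the displacement by
`η ∑ₜ ‖∇_{k}ψ(w 0)‖ + η T ‖∇ψ(w 0)‖ C₁`; squaring with `(a + b)² ≤ 2 (a² + b²)` and
Cauchy–Schwarz gives the claim.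
-/

/-- For a block `k` (blocks given by the assignment `blk : Fin d → K` of coordinates
to blocks), the vector `∇̄_k ψ(v)` agreeing with the gradient of `ψ` at `v` on the
coordinates of block `k` and zero elsewhere.  Note `‖maskedGrad blk ψ v k‖ = ‖∇_k ψ(v)‖`. -/
noncomputable def maskedGrad {d : ℕ} {K : Type*} [DecidableEq K]
    (blk : Fin d → K) (ψ : EuclideanSpace ℝ (Fin d) → ℝ)
    (v : EuclideanSpace ℝ (Fin d)) (k : K) : EuclideanSpace ℝ (Fin d) :=
  WithLp.toLp 2 (fun i => if blk i = k then gradient ψ v i else 0)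

open Finset Real

lemma EuclideanSpace.norm_toLp_ite_le {ι : Type*} [Fintype ι] (p : ι → Prop) [DecidablePred p]
    (u : EuclideanSpace ℝ ι) :
    ‖(WithLp.toLp 2 (fun i => if p i then u i else 0) : EuclideanSpace ℝ ι)‖ ≤ ‖u‖ := by
  simp only [EuclideanSpace.norm_eq]
  gcongr with i
  split_ifs <;> simp

section maskedGrad

variable {d : ℕ} {K : Type*} [DecidableEq K] (blk : Fin d → K) (ψ : EuclideanSpace ℝ (Fin d) → ℝ)

lemma norm_maskedGrad_le (x : EuclideanSpace ℝ (Fin d)) (k : K) :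
    ‖maskedGrad blk ψ x k‖ ≤ ‖gradient ψ x‖ :=
  EuclideanSpace.norm_toLp_ite_le (blk · = k) _

lemma norm_maskedGrad_sub_le (x y : EuclideanSpace ℝ (Fin d)) (k : K) :
    ‖maskedGrad blk ψ x k - maskedGrad blk ψ y k‖ ≤ ‖gradient ψ x - gradient ψ y‖ := by
  have : maskedGrad blk ψ x k - maskedGrad blk ψ y k
      = WithLp.toLp 2 (fun i => if blk i = k then (gradient ψ x - gradient ψ y) i else 0) := by
    ext i
    by_cases h : blk i = k <;> simp [maskedGrad, h]
  rw [this]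
  exact EuclideanSpace.norm_toLp_ite_le (blk · = k) _

end maskedGrad

lemma apply_succ_div_mod_eq {α : Type*} (v : ℕ → ℕ → α) (f : ℕ → α → α) {S Q : ℕ} (hQ : 0 < Q)
    (hinner : ∀ s < S, ∀ q < Q, v s (q + 1) = f s (v s q))
    (houter : ∀ s < S, v (s + 1) 0 = v s Q) :
    ∀ t < S * Q, v ((t + 1) / Q) ((t + 1) % Q) = f (t / Q) (v (t / Q) (t % Q)) := by
  intro t ht
  obtain ⟨s, q, hq, rfl⟩ : ∃ s q, q < Q ∧ t = s * Q + q :=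
    ⟨t / Q, t % Q, Nat.mod_lt _ hQ, (Nat.div_add_mod' t Q).symm⟩
  have hs : s < S := by by_contra! h; nlinarith
  have hdiv (r : ℕ) (hr : r < Q) : (s * Q + r) / Q = s := by
    rw [mul_comm, Nat.mul_add_div hQ, Nat.div_eq_of_lt hr, add_zero]
  rw [hdiv q hq, Nat.mul_add_mod_of_lt hq]
  rcases (show q + 1 ≤ Q from hq).lt_or_eq with hq1 | hq1
  · rw [add_assoc, hdiv _ hq1, Nat.mul_add_mod_of_lt hq1]
    exact hinner s hs q hq
  · rw [add_assoc, hq1, ← Nat.succ_mul, Nat.mul_div_cancel _ hQ,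
      Nat.mul_mod_left, houter s hs, ← hq1]
    exact hinner s hs q hq

lemma sum_range_mul_div_mod {M : Type*} [AddCommMonoid M] (S Q : ℕ) (f : ℕ → ℕ → M) :
    ∑ t ∈ range (S * Q), f (t / Q) (t % Q) = ∑ s ∈ range S, ∑ q ∈ range Q, f s q := by
  rcases Q.eq_zero_or_pos with rfl | hQ
  · simp
  induction S with
  | zero => simp
  | succ S ih =>
    rw [sum_range_succ, ← ih, Nat.succ_mul, sum_range_add]
    congr 1
    refine sum_congr rfl fun q hq => ?_
    rw [Nat.mul_add_mod_of_lt (mem_range.1 hq), mul_comm, Nat.mul_add_div hQ,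
      Nat.div_eq_of_lt (mem_range.1 hq), add_zero]

section PerturbedDescent

variable {E : Type*} [NormedAddCommGroup E] [NormedSpace ℝ E] {w g h : ℕ → E} {η L G : ℝ} {T : ℕ}

lemma norm_sub_initial_le_of_descent (hη : 0 ≤ η) (hL : 0 ≤ L)
    (hstep : ∀ t < T, w (t + 1) = w t - η • g t)
    (hg : ∀ t < T, ‖g t - h t‖ ≤ L * ‖w t - w 0‖) (hh : ∀ t, ‖h t‖ ≤ G)
    (hT : η * L * T ≤ 1) {t : ℕ} (ht : t ≤ T) :
    ‖w t - w 0‖ ≤ η * G * T * exp 1 := by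
  have hG : 0 ≤ G := (norm_nonneg _).trans (hh 0)
  have hrec : ∀ t < T, ‖w (t + 1) - w 0‖ ≤ (1 + η * L) * ‖w t - w 0‖ + η * G := by
    intro t ht
    have hgt : ‖g t‖ ≤ G + L * ‖w t - w 0‖ :=
      (norm_le_norm_add_norm_sub' _ (h t)).trans (add_le_add (hh t) (hg t ht))
    calc ‖w (t + 1) - w 0‖ = ‖(w t - w 0) - η • g t‖ := by rw [hstep t ht, sub_right_comm]
      _ ≤ ‖w t - w 0‖ + η * ‖g t‖ :=
        (norm_sub_le _ _).trans_eq (by rw [norm_smul, Real.norm_of_nonneg hη])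
      _ ≤ ‖w t - w 0‖ + η * (G + L * ‖w t - w 0‖) := by gcongr
      _ = (1 + η * L) * ‖w t - w 0‖ + η * G := by ring
  -- Freezing the sequence after step `T` makes the recursion hold for every index.
  set u : ℕ → ℝ := fun n => ‖w (min n T) - w 0‖
  have hu : ∀ n ≥ 0, u (n + 1) ≤ (1 + η * L) * u n + η * G := by
    intro n _
    rcases lt_or_ge n T with hn | hn
    · simpa [u, Nat.succ_le_of_lt hn, hn.le] using hrec n hn
    · simp only [u, min_eq_right hn, min_eq_right (hn.trans n.le_succ)]
      nlinarith [norm_nonneg (w T - w 0), mul_nonneg hη hL, mul_nonneg hη hG]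
  have := discrete_gronwall (u := u) (c := fun _ => η * L) (b := fun _ => η * G)
    (norm_nonneg _) hu (fun _ _ => mul_nonneg hη hL) (fun _ _ => mul_nonneg hη hG) (Nat.zero_le t)
  simp only [u, min_eq_left ht, Nat.zero_min, sub_self, norm_zero, zero_add, sum_const,
    Nat.card_Ico, Nat.sub_zero, nsmul_eq_mul] at this
  have htT : (t : ℝ) ≤ T := by exact_mod_cast ht
  calc ‖w t - w 0‖ ≤ t * (η * G) * exp (t * (η * L)) := this
    _ ≤ T * (η * G) * exp 1 := by
      gcongr
      nlinarith [mul_nonneg hη hL]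
    _ = η * G * T * exp 1 := by ring

lemma norm_sub_initial_le_sum_of_descent (hη : 0 ≤ η) (hL : 0 ≤ L)
    (hstep : ∀ t < T, w (t + 1) = w t - η • g t)
    (hg : ∀ t < T, ‖g t - h t‖ ≤ L * ‖w t - w 0‖) (hh : ∀ t, ‖h t‖ ≤ G)
    (hT : η * L * T ≤ 1) :
    ‖w T - w 0‖ ≤ η * ∑ t ∈ range T, ‖h t‖ + η * T * L * (η * G * T * exp 1) := by
  have hgt : ∀ t < T, ‖g t‖ ≤ ‖h t‖ + L * (η * G * T * exp 1) := fun t ht =>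
    (norm_le_norm_add_norm_sub' _ (h t)).trans <| add_le_add_right ((hg t ht).trans <|
      mul_le_mul_of_nonneg_left (norm_sub_initial_le_of_descent hη hL hstep hg hh hT ht.le) hL) _
  calc ‖w T - w 0‖ = ‖∑ t ∈ range T, η • g t‖ := by
        rw [← norm_neg, ← sum_range_sub, ← sum_neg_distrib]
        congr 1
        refine sum_congr rfl fun t ht => ?_
        rw [hstep t (mem_range.1 ht)]
        abel
    _ ≤ ∑ t ∈ range T, η * ‖g t‖ := by
        refine (norm_sum_le _ _).trans_eq (sum_congr rfl fun t _ => ?_)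
        rw [norm_smul, Real.norm_of_nonneg hη]
    _ ≤ ∑ t ∈ range T, η * (‖h t‖ + L * (η * G * T * exp 1)) :=
        sum_le_sum fun t ht => mul_le_mul_of_nonneg_left (hgt t (mem_range.1 ht)) hη
    _ = η * ∑ t ∈ range T, ‖h t‖ + η * T * L * (η * G * T * exp 1) := by
        rw [← mul_sum, sum_add_distrib, sum_const, card_range, nsmul_eq_mul]
        ring

lemma sq_norm_sub_initial_le_of_descent (hη : 0 ≤ η) (hL : 0 ≤ L)
    (hstep : ∀ t < T, w (t + 1) = w t - η • g t)
    (hg : ∀ t < T, ‖g t - h t‖ ≤ L * ‖w t - w 0‖) (hh : ∀ t, ‖h t‖ ≤ G)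
    (hT : η * L * T ≤ 1) :
    ‖w T - w 0‖ ^ 2 ≤
      2 * (η ^ 2 * T * ∑ t ∈ range T, ‖h t‖ ^ 2 + (η * T * G * (η * exp 1 * L * T)) ^ 2) := by
  have hcs : (∑ t ∈ range T, ‖h t‖) ^ 2 ≤ T * ∑ t ∈ range T, ‖h t‖ ^ 2 := by
    simpa using sq_sum_le_card_mul_sum_sq (s := range T) (f := fun t => ‖h t‖)
  calc ‖w T - w 0‖ ^ 2
      ≤ (η * ∑ t ∈ range T, ‖h t‖ + η * T * L * (η * G * T * exp 1)) ^ 2 := by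
        gcongr
        exact norm_sub_initial_le_sum_of_descent hη hL hstep hg hh hT
    _ ≤ 2 * ((η * ∑ t ∈ range T, ‖h t‖) ^ 2 + (η * T * L * (η * G * T * exp 1)) ^ 2) := add_sq_le
    _ ≤ _ := by
        rw [mul_pow η]
        gcongr 2 * (?_ + ?_)
        · rw [mul_assoc]; gcongr
        · exact le_of_eq (by ring)

end PerturbedDescent

theorem mccd_quadratic_term_bound_general
    {d : ℕ} {K : Type*} [DecidableEq K]
    (blk : Fin d → K)
    (ψ : EuclideanSpace ℝ (Fin d) → ℝ) (L : ℝ) (hL : 0 < L)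
    (hsmooth : ∀ x y : EuclideanSpace ℝ (Fin d),
      ‖gradient ψ x - gradient ψ y‖ ≤ L * ‖x - y‖)
    (S Q : ℕ) (hQ : 1 ≤ Q)
    (η : ℝ) (hη : 0 < η) (hηub : η ≤ 1 / (L * S * Q))
    (kseq : ℕ → K)
    (v : ℕ → ℕ → EuclideanSpace ℝ (Fin d))
    (hrecq : ∀ s < S, ∀ q < Q,
      v s (q + 1) = v s q - η • maskedGrad blk ψ (v s q) (kseq s))
    (hrecs : ∀ s < S, v (s + 1) 0 = v s Q)
    (C₁ : ℝ) (hC₁ : C₁ = η * Real.exp 1 * L * S * Q) :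
    (L + 1) / 2 * ‖v S 0 - v 0 0‖ ^ 2
      ≤ η ^ 2 * (L + 1) * S ^ 2 * Q ^ 2 * C₁ ^ 2 * ‖gradient ψ (v 0 0)‖ ^ 2
        + η ^ 2 * (L + 1) * S * Q * ∑ s ∈ Finset.range S, ∑ q ∈ Finset.range Q,
            ‖maskedGrad blk ψ (v 0 0) (kseq s)‖ ^ 2 := by
  set w : ℕ → EuclideanSpace ℝ (Fin d) := fun t => v (t / Q) (t % Q)
  have hw0 : w 0 = v 0 0 := by simp [w]
  have hwT : w (S * Q) = v S 0 := by simp [w, Nat.mul_div_cancel _ hQ]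
  have hstep :=
    apply_succ_div_mod_eq v (fun s x => x - η • maskedGrad blk ψ x (kseq s)) hQ hrecq hrecs
  have hT : η * L * ((S * Q : ℕ) : ℝ) ≤ 1 :=
    calc η * L * ((S * Q : ℕ) : ℝ) = η * (L * S * Q) := by push_cast; ring
      _ ≤ 1 := mul_le_of_le_div₀ zero_le_one (by positivity) hηub
  have key := sq_norm_sub_initial_le_of_descent (w := w)
    (h := fun t => maskedGrad blk ψ (w 0) (kseq (t / Q))) hη.le hL.le hstep
    (fun _ _ => (norm_maskedGrad_sub_le blk ψ _ _ _).trans (hsmooth _ _))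
    (fun _ => norm_maskedGrad_le blk ψ _ _) hT
  rw [hw0, hwT,
    sum_range_mul_div_mod S Q (fun s _ => ‖maskedGrad blk ψ (v 0 0) (kseq s)‖ ^ 2)] at key
  refine (mul_le_mul_of_nonneg_left key (by positivity)).trans_eq ?_
  subst hC₁
  push_cast
  ring

/-- **Quadratic-term bound.** For Markov chain coordinate descent iterates of an `L`-smooth
differentiable `ψ` with step size `η ∈ (0, 1/(LSQ)]` and final iterate `v^{S,0}`,
`((L+1)/2)‖v^{S,0} − v⁰⁰‖² ≤ η²(L+1)S²Q²C₁²‖∇ψ(v⁰⁰)‖²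
  + η²(L+1)SQ ∑_{s<S} ∑_{q<Q} ‖∇_{k^s}ψ(v⁰⁰)‖²`, where `C₁ = η e L S Q`. -/
theorem mccd_quadratic_term_bound
    {d : ℕ} (hd : 1 ≤ d) {K : Type*} [Fintype K] [DecidableEq K]
    (blk : Fin d → K)
    (ψ : EuclideanSpace ℝ (Fin d) → ℝ) (L : ℝ) (hL : 0 < L)
    (hdiff : Differentiable ℝ ψ)
    (hsmooth : ∀ x y : EuclideanSpace ℝ (Fin d),
      ‖gradient ψ x - gradient ψ y‖ ≤ L * ‖x - y‖)
    (S Q : ℕ) (hS : 1 ≤ S) (hQ : 1 ≤ Q)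
    (η : ℝ) (hη : 0 < η) (hηub : η ≤ 1 / (L * S * Q))
    (kseq : ℕ → K)
    (v : ℕ → ℕ → EuclideanSpace ℝ (Fin d))
    (hrecq : ∀ s < S, ∀ q < Q,
      v s (q + 1) = v s q - η • maskedGrad blk ψ (v s q) (kseq s))
    (hrecs : ∀ s < S, v (s + 1) 0 = v s Q)
    (C₁ : ℝ) (hC₁ : C₁ = η * Real.exp 1 * L * S * Q) :
    (L + 1) / 2 * ‖v S 0 - v 0 0‖ ^ 2
      ≤ η ^ 2 * (L + 1) * S ^ 2 * Q ^ 2 * C₁ ^ 2 * ‖gradient ψ (v 0 0)‖ ^ 2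
        + η ^ 2 * (L + 1) * S * Q * ∑ s ∈ Finset.range S, ∑ q ∈ Finset.range Q,
            ‖maskedGrad blk ψ (v 0 0) (kseq s)‖ ^ 2 :=
  mccd_quadratic_term_bound_general blk ψ L hL hsmooth S Q hQ η hη hηub kseq v hrecq hrecs C₁ hC₁
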